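/- arXiv:2512.23342 — 3 statements merged into one kernel-verified Lean document; each statement's English description precedes it below -/
import Mathlib

section
/- Let γ̂, φ̂ : ℝ^n → ℂ be measurable functions with φ̂(ξ) = 1 if and only if ξ = 0, γ̂(0) ≠ 0, γ̂ continuous at 0, and φ̂ continuous with φ̂(ξ) → 0 as |ξ| → ∞. Then for each fixed t > 0 there exists C > 0 such that |γ̂(ξ)| / (|γ̂(ξ)|² + |1 − φ̂(tξ)|²) ≤ C for all ξ ∈ ℝ^n. -/
open MeasureTheory Filter Topology

lemma aux_div_bound (x b a c : ℝ) (ha : 0 < a) (hc : 0 < c) (hx : 0 ≤ x)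
    (h : a ≤ x ∨ c ≤ b) : x / (x ^ 2 + b ^ 2) ≤ max (1 / a) (1 / (2 * c)) := by
  rcases h with h | h
  · have hd : 0 < x ^ 2 + b ^ 2 := by nlinarith [sq_nonneg b]
    refine le_trans ?_ (le_max_left _ _)
    rw [div_le_div_iff₀ hd ha]
    nlinarith [sq_nonneg b]
  · have hd : 0 < x ^ 2 + b ^ 2 := by nlinarith [sq_nonneg x]
    refine le_trans ?_ (le_max_right _ _)
    rw [div_le_div_iff₀ hd (by positivity)]
    nlinarith [sq_nonneg (x - c), sq_nonneg x]

/-- Boundedness of the variational mollification filter: if `φ̂(ξ) = 1` iff `ξ = 0`,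
`γ̂(0) ≠ 0` with `γ̂` continuous at `0`, and `φ̂` is continuous and vanishes at infinity,
then for each `t > 0` there is `C > 0` with
`|γ̂(ξ)| / (|γ̂(ξ)|² + |1 − φ̂(tξ)|²) ≤ C` for all `ξ`. -/
theorem stmt_3 (n : ℕ) (hn : 0 < n)
    (γhat φhat : EuclideanSpace ℝ (Fin n) → ℂ)
    (hγm : Measurable γhat) (hφm : Measurable φhat)
    (hφone : ∀ ξ, φhat ξ = 1 ↔ ξ = 0)
    (hγ0 : γhat 0 ≠ 0) (hγc : ContinuousAt γhat 0)
    (hφc : Continuous φhat)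
    (hφinf : Tendsto φhat (cocompact _) (nhds 0)) :
    ∀ t : ℝ, 0 < t → ∃ C : ℝ, 0 < C ∧ ∀ ξ,
      ‖γhat ξ‖ / (‖γhat ξ‖ ^ 2 + ‖1 - φhat (t • ξ)‖ ^ 2) ≤ C := by
  intro t ht

  set a : ℝ := ‖γhat 0‖ / 2 with ha_def
  have ha : 0 < a := by
    have : 0 < ‖γhat 0‖ := norm_pos_iff.mpr hγ0
    positivity
  -- (1) neighborhood of 0 where ‖γhat‖ ≥ a
  have h1 : ∀ᶠ ξ in 𝓝 (0 : EuclideanSpace ℝ (Fin n)), a < ‖γhat ξ‖ :=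
    (hγc.norm).eventually (eventually_gt_nhds (by rw [ha_def]; exact half_lt_self (norm_pos_iff.mpr hγ0)))
  obtain ⟨ε, hε, hball⟩ := Metric.eventually_nhds_iff.mp h1
  -- (2) cocompact bound
  have hsmul : Tendsto (fun ξ : EuclideanSpace ℝ (Fin n) => t • ξ) (cocompact (EuclideanSpace ℝ (Fin n))) (cocompact (EuclideanSpace ℝ (Fin n))) := by
    exact (Homeomorph.smulOfNeZero (t : ℝ) ht.ne' : EuclideanSpace ℝ (Fin n) ≃ₜ EuclideanSpace ℝ (Fin n)).map_cocompact.le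
  have h2 : ∀ᶠ ξ in cocompact (EuclideanSpace ℝ (Fin n)), ‖φhat (t • ξ)‖ < 1 / 2 := by
    have : Tendsto (fun ξ : EuclideanSpace ℝ (Fin n) => ‖φhat (t • ξ)‖) (cocompact (EuclideanSpace ℝ (Fin n))) (𝓝 0) :=
      by simpa using ((hφinf.comp hsmul).norm)
    exact this.eventually (eventually_lt_nhds (by norm_num))
  obtain ⟨K, hK, hKsub⟩ := mem_cocompact.mp h2
  obtain ⟨R, hR⟩ := hK.isBounded.subset_closedBall 0
  set R' : ℝ := max R ε with hR'def
  -- (3) compact annulus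
  set S : Set (EuclideanSpace ℝ (Fin n)) := Metric.closedBall 0 (R' + 1) \ Metric.ball 0 ε with hSdef
  have hScomp : IsCompact S := (isCompact_closedBall 0 (R' + 1)).diff Metric.isOpen_ball
  have hp : ∃ p : EuclideanSpace ℝ (Fin n), ‖p‖ = ε := by
    refine ⟨EuclideanSpace.single ⟨0, hn⟩ ε, ?_⟩
    rw [EuclideanSpace.norm_single]; exact abs_of_pos hε
  obtain ⟨p, hpnorm⟩ := hp
  have hSne : S.Nonempty := by
    refine ⟨p, ?_, ?_⟩
    · rw [Metric.mem_closedBall, dist_zero_right, hpnorm]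
      have : ε ≤ R' := le_max_right _ _
      linarith
    · rw [Metric.mem_ball, dist_zero_right, hpnorm]; exact lt_irrefl ε
  have hgcont : Continuous fun ξ : EuclideanSpace ℝ (Fin n) => ‖(1 : ℂ) - φhat (t • ξ)‖ :=
    (continuous_const.sub (hφc.comp (continuous_const_smul t))).norm
  obtain ⟨x0, hx0S, hx0min⟩ := hScomp.exists_isMinOn hSne hgcont.continuousOn
  set c : ℝ := ‖(1 : ℂ) - φhat (t • x0)‖ with hcdef
  have hcpos : 0 < c := by
    have hx0ne : x0 ≠ 0 := by
      intro h
      have := hx0S.2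
      rw [h] at this
      exact this (Metric.mem_ball_self hε)
    have : φhat (t • x0) ≠ 1 := by
      rw [ne_eq, hφone, smul_eq_zero]
      push_neg
      exact ⟨ht.ne', hx0ne⟩
    rw [hcdef]
    rw [norm_pos_iff, sub_ne_zero]
    exact fun h => this h.symm
  set c' : ℝ := min c (1 / 2) with hc'def
  have hc' : 0 < c' := lt_min hcpos (by norm_num)
  refine ⟨max (1 / a) (1 / (2 * c')), lt_max_of_lt_left (by positivity), fun ξ => ?_⟩
  refine aux_div_bound _ _ _ _ ha hc' (norm_nonneg _) ?_
  by_cases hξ : ‖ξ‖ < ε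
  · left
    exact (hball (by rwa [dist_zero_right])).le
  · right
    push_neg at hξ
    by_cases hξ2 : ‖ξ‖ ≤ R' + 1
    · have hξS : ξ ∈ S := by
        constructor
        · rwa [Metric.mem_closedBall, dist_zero_right]
        · rw [Metric.mem_ball, dist_zero_right]; exact not_lt.mpr hξ
      exact le_trans (min_le_left _ _) (hx0min hξS)
    · push_neg at hξ2
      have hnotK : ξ ∉ K := by
        intro hmem
        have := hR hmem
        rw [Metric.mem_closedBall, dist_zero_right] at this
        have : R' < R := by linarith
        exact absurd (le_max_left R ε) (not_le.mpr this)
      have hφsmall : ‖φhat (t • ξ)‖ < 1 / 2 := hKsub hnotK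
      have : (1 : ℝ) - ‖φhat (t • ξ)‖ ≤ ‖(1 : ℂ) - φhat (t • ξ)‖ := by
        have := norm_sub_norm_le (1 : ℂ) (φhat (t • ξ))
        simpa using this
      refine le_trans (min_le_right _ _) ?_
      linarith
end

section
/- Let φ̂ : ℝ^n → ℂ satisfy |1 − φ̂(ξ)| ≤ c|ξ|^d for all ξ and some c, d > 0, let γ̂ satisfy |γ̂(ξ)| ≥ a^{-1}(1+|ξ|)^{-b} for some a ≥ 1, b > 0, and suppose ∫ (1+|ξ|)^{2(b+d)} |f̂(ξ)| dξ < ∞. Then for every t ∈ (0,1] and x ∈ ℝ^n, |∫ e^{2πix·ξ} f̂(ξ) (1 − |γ̂(ξ)|²φ̂(tξ)/(|γ̂(ξ)|² + |1−φ̂(tξ)|²)) dξ| ≤ t^d · c(1 + a²c) · ∫ (1+|ξ|)^{2(b+d)}|f̂(ξ)| dξ. -/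
/-!
Write `P = |1 − φ̂(tξ)|` and `g = |γ̂(ξ)|²`. Over the common denominator,
`1 − gφ̂/(g + P²)` is `(g(1 − φ̂) + P²)/(g + P²)`, whose modulus is at most `P(1 + P/g)`.
The symbol hypothesis gives `P ≤ c tᵈ (1+|ξ|)ᵈ` and the ellipticity hypothesis gives
`1/g ≤ a²(1+|ξ|)^{2b}`; since `t ≤ 1` the factor `P(1 + P/g)` is therefore at most
`tᵈ c(1 + a²c)(1+|ξ|)^{2(b+d)}`, and integrating against `|f̂|` gives the bound.
-/

open MeasureTheory Real
open scoped RealInnerProductSpace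

lemma norm_one_sub_wiener_le {g : ℝ} (hg : 0 < g) (φ : ℂ) :
    ‖1 - (g : ℂ) * φ / ((g + ‖1 - φ‖ ^ 2 : ℝ) : ℂ)‖ ≤
      ‖1 - φ‖ * (1 + ‖1 - φ‖ / g) := by
  set P := ‖1 - φ‖
  have hden : 0 < g + P ^ 2 := by positivity
  have hden' : ((g + P ^ 2 : ℝ) : ℂ) ≠ 0 := Complex.ofReal_ne_zero.mpr hden.ne'
  have hcommon : 1 - (g : ℂ) * φ / ((g + P ^ 2 : ℝ) : ℂ) =
      ((g : ℂ) * (1 - φ) + ((P ^ 2 : ℝ) : ℂ)) / ((g + P ^ 2 : ℝ) : ℂ) := by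
    field_simp
    push_cast
    ring
  rw [hcommon, norm_div, Complex.norm_real, norm_of_nonneg hden.le, div_le_iff₀ hden]
  calc ‖(g : ℂ) * (1 - φ) + ((P ^ 2 : ℝ) : ℂ)‖
      ≤ g * P + P ^ 2 := by
        refine (norm_add_le _ _).trans_eq ?_
        rw [norm_mul, Complex.norm_real, Complex.norm_real, norm_of_nonneg hg.le,
          norm_of_nonneg (sq_nonneg P)]
    _ ≤ P * (1 + P / g) * (g + P ^ 2) := by
        have hP : 0 ≤ P := norm_nonneg _
        rw [show P * (1 + P / g) * (g + P ^ 2) = g * P + P ^ 2 + P ^ 3 * (1 + P / g) by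
          field_simp]
        have : 0 ≤ P ^ 3 * (1 + P / g) := by positivity
        linarith

lemma inv_sq_le_of_mul_rpow_neg_le {a b X G : ℝ} (ha : 0 < a) (hX : 0 < X)
    (hG : a⁻¹ * X ^ (-b) ≤ G) : (G ^ 2)⁻¹ ≤ a ^ 2 * X ^ (2 * b) := by
  have hlow : 0 < a⁻¹ * X ^ (-b) := by positivity
  calc (G ^ 2)⁻¹ ≤ ((a⁻¹ * X ^ (-b)) ^ 2)⁻¹ := by gcongr
    _ = a ^ 2 * X ^ (2 * b) := by
        have hsq : X ^ (2 * b) = (X ^ b) ^ 2 := by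
          rw [← rpow_natCast, ← rpow_mul hX.le, mul_comm, Nat.cast_ofNat]
        rw [rpow_neg hX.le, hsq]
        field_simp

lemma norm_one_sub_wiener_le_rpow {a b c d t r G : ℝ} {φ : ℂ}
    (ha : 0 < a) (hb : 0 ≤ b) (hc : 0 ≤ c) (hd : 0 ≤ d) (ht : 0 ≤ t) (ht1 : t ≤ 1)
    (hr : 0 ≤ r) (hG : a⁻¹ * (1 + r) ^ (-b) ≤ G) (hφ : ‖1 - φ‖ ≤ c * (t * r) ^ d) :
    ‖1 - ((G ^ 2 : ℝ) : ℂ) * φ / ((G ^ 2 + ‖1 - φ‖ ^ 2 : ℝ) : ℂ)‖ ≤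
      t ^ d * (c * (1 + a ^ 2 * c)) * (1 + r) ^ (2 * (b + d)) := by
  set X := 1 + r
  set P := ‖1 - φ‖
  have hX1 : 1 ≤ X := le_add_of_nonneg_right hr
  have hX : 0 < X := one_pos.trans_le hX1
  have hG2 : 0 < G ^ 2 := pow_pos ((by positivity : (0 : ℝ) < a⁻¹ * X ^ (-b)).trans_le hG) 2
  have htd : t ^ d ≤ 1 := rpow_le_one ht ht1 hd
  have hPt : P ≤ c * t ^ d * X ^ d := by
    calc P ≤ c * (t * r) ^ d := hφ
      _ ≤ c * (t * X) ^ d := by gcongr; linarith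
      _ = c * t ^ d * X ^ d := by rw [mul_rpow ht hX.le, mul_assoc]
  have hP : P ≤ c * X ^ d :=
    hPt.trans (by gcongr; exact mul_le_of_le_one_right hc htd)
  have hXd : X ^ d ≤ X ^ (2 * (b + d)) := rpow_le_rpow_of_exponent_le hX1 (by linarith)
  have hXsplit : X ^ d * X ^ d * X ^ (2 * b) = X ^ (2 * (b + d)) := by
    rw [← rpow_add hX, ← rpow_add hX]
    ring_nf
  calc ‖1 - ((G ^ 2 : ℝ) : ℂ) * φ / ((G ^ 2 + P ^ 2 : ℝ) : ℂ)‖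
      ≤ P + P * P * (G ^ 2)⁻¹ := by
        refine (norm_one_sub_wiener_le hG2 φ).trans_eq ?_
        show P * (1 + P / G ^ 2) = _
        ring
    _ ≤ c * t ^ d * X ^ d + c * t ^ d * X ^ d * (c * X ^ d) * (a ^ 2 * X ^ (2 * b)) := by
        gcongr
        exact inv_sq_le_of_mul_rpow_neg_le ha hX hG
    _ = t ^ d * c * (X ^ d + a ^ 2 * c * (X ^ d * X ^ d * X ^ (2 * b))) := by ring
    _ ≤ t ^ d * c * (X ^ (2 * (b + d)) + a ^ 2 * c * X ^ (2 * (b + d))) := by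
        rw [hXsplit]
        gcongr
    _ = t ^ d * (c * (1 + a ^ 2 * c)) * X ^ (2 * (b + d)) := by ring

theorem stmt_8_general (n : ℕ)
    (γhat φhat fhat : EuclideanSpace ℝ (Fin n) → ℂ)
    (a b c d : ℝ) (ha : 1 ≤ a) (hb : 0 < b) (hc : 0 < c) (hd : 0 < d)
    (hγ : ∀ ξ, a⁻¹ * (1 + ‖ξ‖) ^ (-b) ≤ ‖γhat ξ‖)
    (hφ : ∀ ξ, ‖1 - φhat ξ‖ ≤ c * ‖ξ‖ ^ d)
    (hf : Integrable (fun ξ : EuclideanSpace ℝ (Fin n) =>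
      (1 + ‖ξ‖) ^ (2 * (b + d)) * ‖fhat ξ‖)) :
    ∀ t : ℝ, 0 < t → t ≤ 1 → ∀ x : EuclideanSpace ℝ (Fin n),
      ‖∫ ξ : EuclideanSpace ℝ (Fin n),
          Complex.exp (2 * (π : ℂ) * Complex.I * (⟪x, ξ⟫ : ℂ)) * fhat ξ *
            (1 - ((‖γhat ξ‖ ^ 2 : ℝ) : ℂ) * φhat (t • ξ) /
              ((‖γhat ξ‖ ^ 2 + ‖1 - φhat (t • ξ)‖ ^ 2 : ℝ) : ℂ))‖ ≤
        t ^ d * (c * (1 + a ^ 2 * c)) *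
          ∫ ξ : EuclideanSpace ℝ (Fin n), (1 + ‖ξ‖) ^ (2 * (b + d)) * ‖fhat ξ‖ := by
  intro t ht ht1 x
  rw [← integral_const_mul]
  refine norm_integral_le_of_norm_le (hf.const_mul _) (.of_forall fun ξ => ?_)
  have hφt : ‖1 - φhat (t • ξ)‖ ≤ c * (t * ‖ξ‖) ^ d := by
    simpa only [norm_smul, norm_of_nonneg ht.le] using hφ (t • ξ)
  have hfactor := norm_one_sub_wiener_le_rpow (one_pos.trans_le ha) hb.le hc.le hd.le ht.le
    ht1 (norm_nonneg ξ) (hγ ξ) hφt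
  have hphase : ‖Complex.exp (2 * (π : ℂ) * Complex.I * (⟪x, ξ⟫ : ℂ))‖ = 1 := by
    rw [← Complex.norm_exp_ofReal_mul_I (2 * π * ⟪x, ξ⟫)]
    push_cast
    ring_nf
  rw [norm_mul, norm_mul, hphase, one_mul]
  calc ‖fhat ξ‖ * _
      ≤ ‖fhat ξ‖ * (t ^ d * (c * (1 + a ^ 2 * c)) * (1 + ‖ξ‖) ^ (2 * (b + d))) := by
        gcongr
    _ = _ := by ring

/-- Approximation-error bound in the convergence rate theorem: with
`|1 − φ̂(ξ)| ≤ c|ξ|^d`, `|γ̂(ξ)| ≥ a⁻¹(1+|ξ|)^{-b}` and `⟨ξ⟩^{2(b+d)} f̂ ∈ L¹`, for every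
`t ∈ (0,1]` and `x` the noiseless reconstruction error is at most
`t^d · c(1 + a²c) · ∫ (1+|ξ|)^{2(b+d)} |f̂(ξ)| dξ`. -/
theorem stmt_8 (n : ℕ) (hn : 0 < n)
    (γhat φhat fhat : EuclideanSpace ℝ (Fin n) → ℂ)
    (hγm : Measurable γhat) (hφm : Measurable φhat) (hfm : Measurable fhat)
    (a b c d : ℝ) (ha : 1 ≤ a) (hb : 0 < b) (hc : 0 < c) (hd : 0 < d)
    (hγ : ∀ ξ, a⁻¹ * (1 + ‖ξ‖) ^ (-b) ≤ ‖γhat ξ‖)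
    (hφ : ∀ ξ, ‖1 - φhat ξ‖ ≤ c * ‖ξ‖ ^ d)
    (hf : Integrable (fun ξ : EuclideanSpace ℝ (Fin n) =>
      (1 + ‖ξ‖) ^ (2 * (b + d)) * ‖fhat ξ‖)) :
    ∀ t : ℝ, 0 < t → t ≤ 1 → ∀ x : EuclideanSpace ℝ (Fin n),
      ‖∫ ξ : EuclideanSpace ℝ (Fin n),
          Complex.exp (2 * (π : ℂ) * Complex.I * (⟪x, ξ⟫ : ℂ)) * fhat ξ *
            (1 - ((‖γhat ξ‖ ^ 2 : ℝ) : ℂ) * φhat (t • ξ) /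
              ((‖γhat ξ‖ ^ 2 + ‖1 - φhat (t • ξ)‖ ^ 2 : ℝ) : ℂ))‖ ≤
        t ^ d * (c * (1 + a ^ 2 * c)) *
          ∫ ξ : EuclideanSpace ℝ (Fin n), (1 + ‖ξ‖) ^ (2 * (b + d)) * ‖fhat ξ‖ :=
  stmt_8_general n γhat φhat fhat a b c d ha hb hc hd hγ hφ hf
end

section
/- (Resolution vs. stability trade-off.) Under the assumptions: Ω ⊂ ℝ^n of finite measure, a^{-1}(1+|ξ|)^{-b} ≤ |γ̂(ξ)| ≤ a(1+|ξ|)^b with a ≥ 1, b > 0, radial mollifier transform φ̂(ξ) = Φ(|ξ|) with 0 ≤ Φ(t) ≤ c(1+t)^{-d}, d > b + n, and β : Ω → (0,∞). There exist constants C, B₀ > 0 depending only on a, b, c, d, n, μ(Ω) such that whenever B := α inf_{x∈Ω} β(x) ≤ B₀, the reconstruction map g ↦ f_{α,β}, f_{α,β}(x) = ∫ e^{2πix·ξ} conj(γ̂(ξ))Φ(αβ(x)|ξ|)/(|γ̂(ξ)|²+(1−Φ(αβ(x)|ξ|))²) ĝ(ξ) dξ, restricted to functions supported in Ω, satisfies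 ‖f_{α,β,1} − f_{α,β,2}‖_{L^p(Ω)} ≤ C B^{−n−b} ‖g₁ − g₂‖_{L^p(Ω)} for all p ∈ [1,∞]. -/
/-!
Both reconstructions apply the same multiplier to `ĝ`, so their difference at `x` is bounded by
`‖ĝ₁ - ĝ₂‖_∞ ≤ ‖g₁ - g₂‖_{L¹}` times the `L¹` norm of the multiplier. Because `B ≤ α β(x)`, `Φ`
decays like `(1 + t)^{-d}` and `1 / |γ̂|` grows at most like `(1 + |ξ|)^b`, the multiplier is
dominated by `a c B^{-b} (1 + B|ξ|)^{b-d}`, whose integral is `B^{-n-b}` times a constant since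
`d > n + b`. On the finite-measure set `Ω`, Hölder's inequality turns this `L^∞(Ω)`–`L¹(Ω)` bound
into the `L^p(Ω)` bound.
-/

open MeasureTheory Real FourierTransform Module
open scoped RealInnerProductSpace ENNReal

lemma one_add_rpow_le_rpow_neg_mul_one_add_mul_rpow {B r b : ℝ} (hB : 0 < B) (hB1 : B ≤ 1)
    (hr : 0 ≤ r) (hb : 0 ≤ b) : (1 + r) ^ b ≤ B ^ (-b) * (1 + B * r) ^ b := by
  have h : 1 + r ≤ B⁻¹ * (1 + B * r) := by
    rw [le_inv_mul_iff₀ hB]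
    nlinarith
  calc (1 + r) ^ b ≤ (B⁻¹ * (1 + B * r)) ^ b := by gcongr
    _ = B ^ (-b) * (1 + B * r) ^ b := by
      rw [Real.mul_rpow (by positivity) (by positivity), Real.inv_rpow hB.le, Real.rpow_neg hB.le]

lemma norm_conj_mul_div_norm_sq_add_sq_le {z : ℂ} (hz : z ≠ 0) {t : ℝ} (ht : 0 ≤ t) (s : ℝ) :
    ‖starRingEnd ℂ z * (t : ℂ) / ((‖z‖ ^ 2 + s ^ 2 : ℝ) : ℂ)‖ ≤ t / ‖z‖ := by
  have hz' : 0 < ‖z‖ := norm_pos_iff.2 hz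
  rw [norm_div, norm_mul, RCLike.norm_conj, Complex.norm_real, Complex.norm_real,
    Real.norm_of_nonneg ht, Real.norm_of_nonneg (by positivity)]
  calc ‖z‖ * t / (‖z‖ ^ 2 + s ^ 2) ≤ ‖z‖ * t / ‖z‖ ^ 2 := by
        gcongr
        exact le_add_of_nonneg_right (sq_nonneg s)
    _ = t / ‖z‖ := by field_simp

section Multiplier

variable {E : Type*} [NormedAddCommGroup E] {γhat : E → ℂ} {Φ : ℝ → ℝ}

noncomputable def reconstructionMultiplier (γhat : E → ℂ) (Φ : ℝ → ℝ) (s : ℝ) (ξ : E) : ℂ :=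
  starRingEnd ℂ (γhat ξ) * ((Φ (s * ‖ξ‖) : ℝ) : ℂ) /
    ((‖γhat ξ‖ ^ 2 + (1 - Φ (s * ‖ξ‖)) ^ 2 : ℝ) : ℂ)

lemma measurable_reconstructionMultiplier [MeasurableSpace E] [BorelSpace E]
    (hγ : Measurable γhat) (hΦ : Measurable Φ) (s : ℝ) :
    Measurable (reconstructionMultiplier γhat Φ s) := by
  unfold reconstructionMultiplier
  fun_prop

lemma norm_reconstructionMultiplier_le {a b c d B s : ℝ} (ha : 0 < a) (hb : 0 ≤ b) (hc : 0 ≤ c)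
    (hd : 0 ≤ d) (hB : 0 < B) (hB1 : B ≤ 1) (hBs : B ≤ s)
    (hγ : ∀ ξ, a⁻¹ * (1 + ‖ξ‖) ^ (-b) ≤ ‖γhat ξ‖)
    (hΦ : ∀ t, 0 ≤ t → 0 ≤ Φ t ∧ Φ t ≤ c * (1 + t) ^ (-d)) (ξ : E) :
    ‖reconstructionMultiplier γhat Φ s ξ‖ ≤ a * c * B ^ (-b) * (1 + B * ‖ξ‖) ^ (b - d) := by
  have hγ0 : 0 < ‖γhat ξ‖ := lt_of_lt_of_le (by positivity) (hγ ξ)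
  obtain ⟨hΦ0, hΦd⟩ := hΦ (s * ‖ξ‖) (by have := hB.trans_le hBs; positivity)
  have hinv : ‖γhat ξ‖⁻¹ ≤ a * (B ^ (-b) * (1 + B * ‖ξ‖) ^ b) := by
    calc ‖γhat ξ‖⁻¹ ≤ (a⁻¹ * (1 + ‖ξ‖) ^ (-b))⁻¹ := inv_anti₀ (by positivity) (hγ ξ)
      _ = a * (1 + ‖ξ‖) ^ b := by rw [mul_inv, inv_inv, Real.rpow_neg (by positivity), inv_inv]
      _ ≤ _ := by
        gcongr
        exact one_add_rpow_le_rpow_neg_mul_one_add_mul_rpow hB hB1 (norm_nonneg ξ) hb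
  have hdecay : Φ (s * ‖ξ‖) ≤ c * (1 + B * ‖ξ‖) ^ (-d) :=
    hΦd.trans <| mul_le_mul_of_nonneg_left
      (Real.rpow_le_rpow_of_nonpos (by positivity) (by gcongr) (neg_nonpos.2 hd)) hc
  calc ‖reconstructionMultiplier γhat Φ s ξ‖ ≤ Φ (s * ‖ξ‖) * ‖γhat ξ‖⁻¹ := by
        rw [← div_eq_mul_inv]
        exact norm_conj_mul_div_norm_sq_add_sq_le (norm_pos_iff.1 hγ0) hΦ0 _
    _ ≤ c * (1 + B * ‖ξ‖) ^ (-d) * (a * (B ^ (-b) * (1 + B * ‖ξ‖) ^ b)) :=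
        mul_le_mul hdecay hinv (by positivity) (by positivity)
    _ = a * c * B ^ (-b) * (1 + B * ‖ξ‖) ^ (b - d) := by
        rw [sub_eq_add_neg, Real.rpow_add (by positivity)]
        ring

end Multiplier

section Fourier

variable {E : Type*} [NormedAddCommGroup E] [InnerProductSpace ℝ E] [FiniteDimensional ℝ E]
  [MeasurableSpace E] [BorelSpace E]

lemma integral_comp_mul_norm (f : ℝ → ℝ) {B : ℝ} (hB : 0 ≤ B) :
    ∫ ξ : E, f (B * ‖ξ‖) = (B ^ finrank ℝ E)⁻¹ * ∫ ξ : E, f ‖ξ‖ := by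
  simpa [norm_smul, abs_of_nonneg hB] using
    Measure.integral_comp_smul_of_nonneg volume (fun ξ : E => f ‖ξ‖) B (hR := hB)

lemma integrable_comp_mul_norm {f : ℝ → ℝ} (hf : Integrable fun ξ : E => f ‖ξ‖) {B : ℝ}
    (hB : 0 < B) : Integrable fun ξ : E => f (B * ‖ξ‖) := by
  simpa [norm_smul, abs_of_pos hB] using hf.comp_smul hB.ne'

lemma integral_one_add_mul_norm_rpow {B : ℝ} (hB : 0 < B) (r : ℝ) :
    ∫ ξ : E, (1 + B * ‖ξ‖) ^ r = B ^ (-(finrank ℝ E : ℝ)) * ∫ ξ : E, (1 + ‖ξ‖) ^ r := by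
  rw [integral_comp_mul_norm (fun t => (1 + t) ^ r) hB.le, Real.rpow_neg hB.le,
    Real.rpow_natCast]

lemma fourier_sub {f g : E → ℂ} (hf : Integrable f) (hg : Integrable g) :
    𝓕 (f - g) = 𝓕 f - 𝓕 g := by
  ext ξ
  simp only [Real.fourier_eq, Pi.sub_apply, smul_sub]
  exact integral_sub ((Real.fourierIntegral_convergent_iff ξ).2 hf)
    ((Real.fourierIntegral_convergent_iff ξ).2 hg)

lemma norm_fourier_le_integral_norm (f : E → ℂ) (ξ : E) : ‖𝓕 f ξ‖ ≤ ∫ x, ‖f x‖ :=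
  VectorFourier.norm_fourierIntegral_le_integral_norm _ _ _ _ _

lemma continuous_fourier {f : E → ℂ} (hf : Integrable f) : Continuous (𝓕 f) :=
  VectorFourier.fourierIntegral_continuous Real.continuous_fourierChar continuous_inner hf

section Dominated

variable {W : E → ℂ} {M : E → ℝ}

lemma integrable_mul_fourier (hW : AEStronglyMeasurable W) (hM : Integrable M)
    (hWM : ∀ ξ, ‖W ξ‖ ≤ M ξ) {g : E → ℂ} (hg : Integrable g) :
    Integrable fun ξ => W ξ * 𝓕 g ξ := by
  refine (hM.mul_const (∫ x, ‖g x‖)).mono' (hW.mul (continuous_fourier hg).aestronglyMeasurable)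
    (ae_of_all _ fun ξ => ?_)
  rw [norm_mul]
  exact mul_le_mul (hWM ξ) (norm_fourier_le_integral_norm g ξ) (norm_nonneg _)
    ((norm_nonneg _).trans (hWM ξ))

lemma norm_integral_mul_fourier_le (hM : Integrable M) (hWM : ∀ ξ, ‖W ξ‖ ≤ M ξ) (g : E → ℂ) :
    ‖∫ ξ, W ξ * 𝓕 g ξ‖ ≤ (∫ ξ, M ξ) * ∫ x, ‖g x‖ := by
  rw [← integral_mul_const]
  refine norm_integral_le_of_norm_le (hM.mul_const _) (ae_of_all _ fun ξ => ?_)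
  rw [norm_mul]
  exact mul_le_mul (hWM ξ) (norm_fourier_le_integral_norm g ξ) (norm_nonneg _)
    ((norm_nonneg _).trans (hWM ξ))

lemma integral_mul_fourier_sub (hW : AEStronglyMeasurable W) (hM : Integrable M)
    (hWM : ∀ ξ, ‖W ξ‖ ≤ M ξ) {g₁ g₂ : E → ℂ} (hg₁ : Integrable g₁) (hg₂ : Integrable g₂) :
    (∫ ξ, W ξ * 𝓕 g₁ ξ) - ∫ ξ, W ξ * 𝓕 g₂ ξ = ∫ ξ, W ξ * 𝓕 (g₁ - g₂) ξ := by
  rw [← integral_sub (integrable_mul_fourier hW hM hWM hg₁)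
    (integrable_mul_fourier hW hM hWM hg₂), fourier_sub hg₁ hg₂]
  simp only [Pi.sub_apply, mul_sub]

end Dominated

/-- `f_{α,β}` is `reconstruction γhat Φ (fun x => α * β x)`: the multiplier at `x` is taken at the
local resolution `s x`. -/
noncomputable def reconstruction (γhat : E → ℂ) (Φ : ℝ → ℝ) (s : E → ℝ) (g : E → ℂ) (x : E) :
    ℂ :=
  ∫ ξ, Complex.exp (2 * (π : ℂ) * Complex.I * (⟪x, ξ⟫ : ℂ)) *
    reconstructionMultiplier γhat Φ (s x) ξ * 𝓕 g ξ

variable {γhat : E → ℂ} {Φ : ℝ → ℝ}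

lemma norm_reconstruction_sub_le {a b c d B : ℝ} {s : E → ℝ} (ha : 0 < a) (hb : 0 ≤ b)
    (hc : 0 ≤ c) (hbd : b + finrank ℝ E < d) (hB : 0 < B) (hB1 : B ≤ 1)
    (hγm : Measurable γhat) (hΦm : Measurable Φ)
    (hγ : ∀ ξ, a⁻¹ * (1 + ‖ξ‖) ^ (-b) ≤ ‖γhat ξ‖)
    (hΦ : ∀ t, 0 ≤ t → 0 ≤ Φ t ∧ Φ t ≤ c * (1 + t) ^ (-d))
    {g₁ g₂ : E → ℂ} (hg₁ : Integrable g₁) (hg₂ : Integrable g₂) {x : E} (hx : B ≤ s x) :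
    ‖reconstruction γhat Φ s g₁ x - reconstruction γhat Φ s g₂ x‖ ≤
      a * c * B ^ (-(finrank ℝ E : ℝ) - b) * (∫ ξ : E, (1 + ‖ξ‖) ^ (b - d)) *
        ∫ y, ‖(g₁ - g₂) y‖ := by
  set W : E → ℂ := fun ξ => Complex.exp (2 * (π : ℂ) * Complex.I * (⟪x, ξ⟫ : ℂ)) *
    reconstructionMultiplier γhat Φ (s x) ξ
  set M : E → ℝ := fun ξ => a * c * B ^ (-b) * (1 + B * ‖ξ‖) ^ (b - d)
  have hWm : AEStronglyMeasurable W := by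
    have := measurable_reconstructionMultiplier hγm hΦm (s x)
    fun_prop
  have hd : 0 ≤ d := by linarith [Nat.cast_nonneg (α := ℝ) (finrank ℝ E)]
  have hWM : ∀ ξ, ‖W ξ‖ ≤ M ξ := fun ξ => by
    simpa [W, Complex.norm_exp] using
      norm_reconstructionMultiplier_le ha hb hc hd hB hB1 hx hγ hΦ ξ
  have hIint : Integrable fun ξ : E => (1 + ‖ξ‖) ^ (b - d) := by
    simpa only [neg_sub] using integrable_one_add_norm (E := E) (μ := volume) (r := d - b)
      (by linarith)
  have hM : Integrable M :=
    (integrable_comp_mul_norm (f := fun t => (1 + t) ^ (b - d)) hIint hB).const_mul _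
  have hMint :
      ∫ ξ, M ξ = a * c * B ^ (-(finrank ℝ E : ℝ) - b) * ∫ ξ : E, (1 + ‖ξ‖) ^ (b - d) := by
    rw [integral_const_mul, integral_one_add_mul_norm_rpow hB, sub_eq_add_neg _ b,
      Real.rpow_add hB]
    ring
  calc ‖reconstruction γhat Φ s g₁ x - reconstruction γhat Φ s g₂ x‖
      = ‖∫ ξ, W ξ * 𝓕 (g₁ - g₂) ξ‖ := by
        rw [← integral_mul_fourier_sub hWm hM hWM hg₁ hg₂]
        rfl
    _ ≤ _ := hMint ▸ norm_integral_mul_fourier_le hM hWM _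

end Fourier

lemma eLpNorm_restrict_le_of_norm_le_mul_integral {α F : Type*} [MeasurableSpace α]
    [NormedAddCommGroup F] {μ : Measure α} {s : Set α} (hs : MeasurableSet s) (hμs : μ s ≠ ⊤)
    {p : ℝ≥0∞} (hp : 1 ≤ p) {f : α → F} {g : α → F} (hg : Integrable g μ)
    (hgs : ∀ x ∉ s, g x = 0) {K : ℝ} (hK : 0 ≤ K) (hf : ∀ x ∈ s, ‖f x‖ ≤ K * ∫ y, ‖g y‖ ∂μ) :
    eLpNorm f p (μ.restrict s) ≤
      ENNReal.ofReal ((μ s).toReal * K) * eLpNorm g p (μ.restrict s) := by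
  rcases eq_or_ne (μ s) 0 with hμ0 | hμ0
  · simp [Measure.restrict_eq_zero.2 hμ0]
  have hL1 : ENNReal.ofReal (∫ y, ‖g y‖ ∂μ) = eLpNorm g 1 (μ.restrict s) := by
    rw [eLpNorm_one_eq_lintegral_enorm, ← ofReal_integral_norm_eq_lintegral_enorm hg.restrict,
      setIntegral_eq_integral_of_forall_compl_eq_zero fun y hy => by simp [hgs y hy]]
  have hHolder :
      eLpNorm g 1 (μ.restrict s) ≤ eLpNorm g p (μ.restrict s) * μ s ^ (1 - p.toReal⁻¹) := by
    simpa using eLpNorm_le_eLpNorm_mul_rpow_measure_univ hp hg.restrict.aestronglyMeasurable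
  calc eLpNorm f p (μ.restrict s) ≤ μ s ^ p.toReal⁻¹ * ENNReal.ofReal (K * ∫ y, ‖g y‖ ∂μ) := by
        simpa using eLpNorm_le_of_ae_bound ((ae_restrict_iff' hs).2 (ae_of_all _ hf))
    _ ≤ μ s ^ p.toReal⁻¹ *
          (ENNReal.ofReal K * (eLpNorm g p (μ.restrict s) * μ s ^ (1 - p.toReal⁻¹))) := by
        rw [ENNReal.ofReal_mul hK, hL1]
        gcongr
    _ = (μ s ^ p.toReal⁻¹ * μ s ^ (1 - p.toReal⁻¹)) * ENNReal.ofReal K *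
          eLpNorm g p (μ.restrict s) := by ring
    _ = ENNReal.ofReal ((μ s).toReal * K) * eLpNorm g p (μ.restrict s) := by
        rw [← ENNReal.rpow_add _ _ hμ0 hμs, add_sub_cancel, ENNReal.rpow_one,
          ENNReal.ofReal_mul ENNReal.toReal_nonneg, ENNReal.ofReal_toReal hμs]

theorem stmt_13_general (n : ℕ)
    (Ω : Set (EuclideanSpace ℝ (Fin n))) (hΩ : MeasurableSet Ω)
    (hΩfin : volume Ω ≠ ⊤)
    (a b c d : ℝ) (ha : 1 ≤ a) (hb : 0 < b) (hc : 0 < c) (hd : b + (n : ℝ) < d) :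
    ∃ C B₀ : ℝ, 0 < C ∧ 0 < B₀ ∧
      ∀ (γhat : EuclideanSpace ℝ (Fin n) → ℂ), Measurable γhat →
      ∀ (Φ : ℝ → ℝ), Measurable Φ →
      (∀ ξ, a⁻¹ * (1 + ‖ξ‖) ^ (-b) ≤ ‖γhat ξ‖) →
      (∀ ξ, ‖γhat ξ‖ ≤ a * (1 + ‖ξ‖) ^ b) →
      (∀ t : ℝ, 0 ≤ t → 0 ≤ Φ t ∧ Φ t ≤ c * (1 + t) ^ (-d)) →
      ∀ (β : EuclideanSpace ℝ (Fin n) → ℝ), Measurable β → (∀ x, 0 < β x) →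
      ∀ α : ℝ, 0 < α →
      0 < α * sInf (β '' Ω) → α * sInf (β '' Ω) ≤ B₀ →
      ∀ p : ℝ≥0∞, 1 ≤ p →
      ∀ g₁ g₂ : EuclideanSpace ℝ (Fin n) → ℂ,
        Integrable g₁ → Integrable g₂ →
        (∀ x ∉ Ω, g₁ x = 0) → (∀ x ∉ Ω, g₂ x = 0) →
        eLpNorm (fun x =>
            (∫ ξ : EuclideanSpace ℝ (Fin n),
              Complex.exp (2 * (π : ℂ) * Complex.I * (⟪x, ξ⟫ : ℂ)) *
                ((starRingEnd ℂ) (γhat ξ) * ((Φ (α * β x * ‖ξ‖) : ℝ) : ℂ) /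
                  ((‖γhat ξ‖ ^ 2 + (1 - Φ (α * β x * ‖ξ‖)) ^ 2 : ℝ) : ℂ)) * 𝓕 g₁ ξ) -
            (∫ ξ : EuclideanSpace ℝ (Fin n),
              Complex.exp (2 * (π : ℂ) * Complex.I * (⟪x, ξ⟫ : ℂ)) *
                ((starRingEnd ℂ) (γhat ξ) * ((Φ (α * β x * ‖ξ‖) : ℝ) : ℂ) /
                  ((‖γhat ξ‖ ^ 2 + (1 - Φ (α * β x * ‖ξ‖)) ^ 2 : ℝ) : ℂ)) * 𝓕 g₂ ξ))
          p (volume.restrict Ω) ≤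
        ENNReal.ofReal (C * (α * sInf (β '' Ω)) ^ (-(n : ℝ) - b)) *
          eLpNorm (g₁ - g₂) p (volume.restrict Ω) := by
  set I := ∫ ξ : EuclideanSpace ℝ (Fin n), (1 + ‖ξ‖) ^ (b - d)
  have hI : 0 ≤ I := integral_nonneg fun ξ => by positivity
  refine ⟨(volume Ω).toReal * (a * c * I) + 1, 1, by positivity, one_pos, ?_⟩
  intro γhat hγm Φ hΦm hγ _ hΦ β _ hβ α hα hB hB1 p hp g₁ g₂ hg₁ hg₂ hg₁Ω hg₂Ω
  have hBx : ∀ x ∈ Ω, α * sInf (β '' Ω) ≤ α * β x := fun x hx =>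
    mul_le_mul_of_nonneg_left
      (csInf_le ⟨0, by rintro _ ⟨y, -, rfl⟩; exact (hβ y).le⟩ (Set.mem_image_of_mem β hx)) hα.le
  have hfinrank : (finrank ℝ (EuclideanSpace ℝ (Fin n)) : ℝ) = n := by simp
  change eLpNorm (fun x => reconstruction γhat Φ (fun x => α * β x) g₁ x -
    reconstruction γhat Φ (fun x => α * β x) g₂ x) p (volume.restrict Ω) ≤ _
  calc _ ≤ ENNReal.ofReal ((volume Ω).toReal *
          (a * c * (α * sInf (β '' Ω)) ^ (-(n : ℝ) - b) * I)) *
          eLpNorm (g₁ - g₂) p (volume.restrict Ω) :=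
        eLpNorm_restrict_le_of_norm_le_mul_integral hΩ hΩfin hp (hg₁.sub hg₂)
          (fun x hx => by simp [hg₁Ω x hx, hg₂Ω x hx]) (by positivity) fun x hx => by
            simpa only [hfinrank] using norm_reconstruction_sub_le (s := fun x => α * β x)
              (by linarith) hb.le hc.le (by rwa [hfinrank]) hB hB1 hγm hΦm hγ hΦ hg₁ hg₂
              (hBx x hx)
    _ ≤ _ := by
        gcongr ENNReal.ofReal ?_ * _
        linarith [Real.rpow_pos_of_pos hB (-(n : ℝ) - b)]

/-- Resolution vs. stability trade-off: there are constants `C, B₀ > 0` depending only on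
`a, b, c, d, n, μ(Ω)` such that whenever `B = α·inf_Ω β ≤ B₀`, the variable-resolution
reconstruction map `g ↦ f_{α,β}` applied to data supported in `Ω` satisfies
`‖f_{α,β,1} − f_{α,β,2}‖_{L^p(Ω)} ≤ C B^{−n−b} ‖g₁ − g₂‖_{L^p(Ω)}` for every `p ∈ [1,∞]`. -/
theorem stmt_13 (n : ℕ) (hn : 0 < n)
    (Ω : Set (EuclideanSpace ℝ (Fin n))) (hΩ : MeasurableSet Ω) (hΩne : Ω.Nonempty)
    (hΩfin : volume Ω ≠ ⊤)
    (a b c d : ℝ) (ha : 1 ≤ a) (hb : 0 < b) (hc : 0 < c) (hd : b + (n : ℝ) < d) :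
    ∃ C B₀ : ℝ, 0 < C ∧ 0 < B₀ ∧
      ∀ (γhat : EuclideanSpace ℝ (Fin n) → ℂ), Measurable γhat →
      ∀ (Φ : ℝ → ℝ), Measurable Φ →
      (∀ ξ, a⁻¹ * (1 + ‖ξ‖) ^ (-b) ≤ ‖γhat ξ‖) →
      (∀ ξ, ‖γhat ξ‖ ≤ a * (1 + ‖ξ‖) ^ b) →
      (∀ t : ℝ, 0 ≤ t → 0 ≤ Φ t ∧ Φ t ≤ c * (1 + t) ^ (-d)) →
      ∀ (β : EuclideanSpace ℝ (Fin n) → ℝ), Measurable β → (∀ x, 0 < β x) →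
      ∀ α : ℝ, 0 < α →
      0 < α * sInf (β '' Ω) → α * sInf (β '' Ω) ≤ B₀ →
      ∀ p : ℝ≥0∞, 1 ≤ p →
      ∀ g₁ g₂ : EuclideanSpace ℝ (Fin n) → ℂ,
        Integrable g₁ → Integrable g₂ →
        (∀ x ∉ Ω, g₁ x = 0) → (∀ x ∉ Ω, g₂ x = 0) →
        eLpNorm (fun x =>
            (∫ ξ : EuclideanSpace ℝ (Fin n),
              Complex.exp (2 * (π : ℂ) * Complex.I * (⟪x, ξ⟫ : ℂ)) *
                ((starRingEnd ℂ) (γhat ξ) * ((Φ (α * β x * ‖ξ‖) : ℝ) : ℂ) /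
                  ((‖γhat ξ‖ ^ 2 + (1 - Φ (α * β x * ‖ξ‖)) ^ 2 : ℝ) : ℂ)) * 𝓕 g₁ ξ) -
            (∫ ξ : EuclideanSpace ℝ (Fin n),
              Complex.exp (2 * (π : ℂ) * Complex.I * (⟪x, ξ⟫ : ℂ)) *
                ((starRingEnd ℂ) (γhat ξ) * ((Φ (α * β x * ‖ξ‖) : ℝ) : ℂ) /
                  ((‖γhat ξ‖ ^ 2 + (1 - Φ (α * β x * ‖ξ‖)) ^ 2 : ℝ) : ℂ)) * 𝓕 g₂ ξ))
          p (volume.restrict Ω) ≤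
        ENNReal.ofReal (C * (α * sInf (β '' Ω)) ^ (-(n : ℝ) - b)) *
          eLpNorm (g₁ - g₂) p (volume.restrict Ω) :=
  stmt_13_general n Ω hΩ hΩfin a b c d ha hb hc hd
end
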